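/- The duplication formulas: for all z ∈ ℂ, 3·c(z)² = c(2z) + 2c(−z), 3·s(z)² = d(2z) + 2d(−z), and 3·d(z)² = s(2z) + 2s(−z). -/
import Mathlib

open Complex

noncomputable def ζ₁ : ℂ := 1
noncomputable def ζ₂ : ℂ := (-1 + Complex.I * Real.sqrt 3) / 2
noncomputable def ζ₃ : ℂ := (-1 - Complex.I * Real.sqrt 3) / 2

noncomputable def c (z : ℂ) : ℂ :=
  (Complex.exp (z * ζ₁) + Complex.exp (z * ζ₂) + Complex.exp (z * ζ₃)) / 3
noncomputable def s (z : ℂ) : ℂ :=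
  (ζ₁⁻¹ * Complex.exp (z * ζ₁) + ζ₂⁻¹ * Complex.exp (z * ζ₂) + ζ₃⁻¹ * Complex.exp (z * ζ₃)) / 3
noncomputable def d (z : ℂ) : ℂ :=
  (ζ₁⁻¹ ^ 2 * Complex.exp (z * ζ₁) + ζ₂⁻¹ ^ 2 * Complex.exp (z * ζ₂) + ζ₃⁻¹ ^ 2 * Complex.exp (z * ζ₃)) / 3

lemma hq : ζ₂ ^ 2 + ζ₂ + 1 = 0 := by
  have hr : (Real.sqrt 3 : ℂ) ^ 2 = 3 := by
    norm_cast; rw [Real.sq_sqrt] <;> norm_num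
  have hI := Complex.I_sq
  unfold ζ₂
  linear_combination ((Real.sqrt 3:ℂ)^2/4)*hI - (1/4)*hr

lemma h3lin : ζ₃ = -1 - ζ₂ := by unfold ζ₂ ζ₃; ring

lemma hq2 : ζ₃ = ζ₂ ^ 2 := by rw [h3lin]; linear_combination -hq

lemma hmul : ζ₂ * ζ₃ = 1 := by rw [h3lin]; linear_combination -hq

lemma hcube : ζ₂ ^ 3 = 1 := by
  have := hmul; rw [hq2] at this; linear_combination this

lemma hi2 : ζ₂⁻¹ = ζ₃ := inv_eq_of_mul_eq_one_right hmul
lemma hi3 : ζ₃⁻¹ = ζ₂ := inv_eq_of_mul_eq_one_right (by rw [mul_comm]; exact hmul)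
lemma hi1 : ζ₁⁻¹ = 1 := by simp [ζ₁]

theorem duplication (z : ℂ) :
    3 * c z ^ 2 = c (2 * z) + 2 * c (-z) ∧
    3 * s z ^ 2 = d (2 * z) + 2 * d (-z) ∧
    3 * d z ^ 2 = s (2 * z) + 2 * s (-z) := by
  have hsum : ζ₁ + ζ₂ + ζ₃ = 0 := by rw [h3lin]; unfold ζ₁; ring
  have e1 : Complex.exp (2*z*ζ₁) = Complex.exp (z*ζ₁) ^ 2 := by
    rw [sq, ← Complex.exp_add]; ring_nf
  have e2 : Complex.exp (2*z*ζ₂) = Complex.exp (z*ζ₂) ^ 2 := by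
    rw [sq, ← Complex.exp_add]; ring_nf
  have e3 : Complex.exp (2*z*ζ₃) = Complex.exp (z*ζ₃) ^ 2 := by
    rw [sq, ← Complex.exp_add]; ring_nf
  have m1 : Complex.exp (-z*ζ₁) = Complex.exp (z*ζ₂) * Complex.exp (z*ζ₃) := by
    rw [← Complex.exp_add]; congr 1; linear_combination (-z) * hsum
  have m2 : Complex.exp (-z*ζ₂) = Complex.exp (z*ζ₁) * Complex.exp (z*ζ₃) := by
    rw [← Complex.exp_add]; congr 1; linear_combination (-z) * hsum
  have m3 : Complex.exp (-z*ζ₃) = Complex.exp (z*ζ₁) * Complex.exp (z*ζ₂) := by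
    rw [← Complex.exp_add]; congr 1; linear_combination (-z) * hsum
  set a := Complex.exp (z*ζ₁) with ha
  set b := Complex.exp (z*ζ₂) with hb
  set e := Complex.exp (z*ζ₃) with he
  unfold c s d
  refine ⟨?_, ?_, ?_⟩ <;>
    simp only [e1, e2, e3, m1, m2, m3, hi1, hi2, hi3, ← ha, ← hb, ← he]
  · ring
  · rw [hq2]
    linear_combination (2*(b*e - ζ₂*a*e)/3) * hcube
  · rw [hq2]
    linear_combination ((2*ζ₂*a*b + ζ₂*e^2 + 2*(ζ₂^3+1)*b*e + ζ₂^2*(ζ₂^3+1)*b^2)/3) * hcube
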